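/- For every even integer n ≥ 2, real a ≥ 1, and x ∈ (0, π): ∑_{j odd, 1 ≤ j ≤ n} C(n + a − j, n − j) sin(jx) ≥ 2 sin(x), with equality if and only if (n = 2, a = 1) or (n = 4, a = 1, x = π/2). -/

import Mathlib

open Real Finset

/-- Generalized binomial coefficient `(a + k choose k) = ∏_{ν=1}^{k} (a+ν)/ν`. -/
noncomputable def gbinom (a : ℝ) (k : ℕ) : ℝ := ∏ ν ∈ Finset.Icc 1 k, (a + ν) / ν

/-- `S n a x = ∑_{j=1}^n C(n+a−j, n−j) sin(jx)`. -/
noncomputable def S (n : ℕ) (a : ℝ) (x : ℝ) : ℝ :=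
  ∑ j ∈ Finset.Icc 1 n, gbinom a (n - j) * Real.sin (j * x)

/-- `Sstar n a x`: the sum restricted to odd indices `j`. -/
noncomputable def Sstar (n : ℕ) (a : ℝ) (x : ℝ) : ℝ :=
  ∑ j ∈ (Finset.Icc 1 n).filter (fun j => Odd j), gbinom a (n - j) * Real.sin (j * x)

lemma gbinom_zero (a : ℝ) : gbinom a 0 = 1 := by simp [gbinom]

lemma gbinom_succ (a : ℝ) (k : ℕ) :
    gbinom a (k + 1) = gbinom a k * ((a + (k+1)) / (k+1)) := by
  rw [gbinom, gbinom, Finset.prod_Icc_succ_top (by omega)]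
  push_cast; ring

lemma gbinom_succ' (a : ℝ) (k : ℕ) :
    ((k:ℝ)+1) * gbinom a (k+1) = gbinom a k * (a + ((k:ℝ)+1)) := by
  rw [gbinom_succ]
  have hk : ((k:ℝ)+1) ≠ 0 := by positivity
  field_simp

lemma gbinom_zero_left (k : ℕ) : gbinom 0 k = 1 := by
  induction k with
  | zero => simp [gbinom]
  | succ k ih =>
    rw [gbinom_succ, ih, zero_add, div_self (by positivity)]; ring

lemma one_le_gbinom {a : ℝ} (ha : 0 ≤ a) (k : ℕ) : 1 ≤ gbinom a k := by
  induction k with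
  | zero => simp [gbinom]
  | succ k ih =>
    rw [gbinom_succ]
    have h1 : (1:ℝ) ≤ (a + (k+1)) / (k+1) := by
      rw [le_div_iff₀ (by positivity)]
      linarith
    nlinarith

lemma le_gbinom_of_one_le {a : ℝ} (ha : 0 ≤ a) {k : ℕ} (hk : 1 ≤ k) :
    a + 1 ≤ gbinom a k := by
  induction k with
  | zero => omega
  | succ k ih =>
    rcases Nat.eq_zero_or_pos k with h | h
    · subst h
      rw [gbinom_succ, gbinom_zero]
      norm_num
    · have h2 := ih h
      rw [gbinom_succ]
      have h1 : (1:ℝ) ≤ (a + (k+1)) / (k+1) := by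
        rw [le_div_iff₀ (by positivity)]
        linarith
      nlinarith

lemma gbinom_mul (a : ℝ) (k : ℕ) :
    gbinom (a-1) k * (a + k) = gbinom a k * a := by
  induction k with
  | zero => simp [gbinom_zero]
  | succ m ihm =>
    have h1 := gbinom_succ' (a-1) m
    have h2 := gbinom_succ' a m
    have hne : ((m:ℝ)+1) ≠ 0 := by positivity
    have key : ((m:ℝ)+1) * (gbinom (a-1) (m+1) * (a + ((m:ℝ)+1))) =
        ((m:ℝ)+1) * (gbinom a (m+1) * a) := by
      linear_combination (a + (m:ℝ) + 1) * h1 - a * h2 + (a + (m:ℝ) + 1) * ihm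
    have := mul_left_cancel₀ hne key
    push_cast
    convert this using 2

/-- hockey stick -/
lemma gbinom_hockey (a : ℝ) (k : ℕ) :
    gbinom a k = ∑ i ∈ Finset.range (k+1), gbinom (a-1) i := by
  induction k with
  | zero => simp [gbinom]
  | succ k ih =>
    rw [Finset.sum_range_succ, ← ih]
    have h := gbinom_succ' (a-1) k
    have h2 := gbinom_succ' a k
    have hkey := gbinom_mul a k
    have hne : ((k:ℝ)+1) ≠ 0 := by positivity
    have : ((k:ℝ)+1) * gbinom a (k+1) =
        ((k:ℝ)+1) * (gbinom a k + gbinom (a-1) (k+1)) := by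
      linear_combination h2 - h - hkey
    exact mul_left_cancel₀ hne this

lemma tele (x : ℝ) (m : ℕ) :
    (∑ k ∈ Finset.range m, Real.sin ((2*k+1)*x)) * Real.sin x = Real.sin (m*x)^2 := by
  induction m with
  | zero => simp
  | succ m ih =>
    rw [Finset.sum_range_succ, add_mul, ih]
    push_cast
    have h1 : ((m:ℝ)+1)*x = m*x + x := by ring
    have h2 : (2*(m:ℝ)+1)*x = m*x + (m*x + x) := by ring
    rw [h1, h2, Real.sin_add (m*x) (m*x+x), Real.sin_add (m*x) x,
      Real.cos_add (m*x) x]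
    nlinarith [Real.sin_sq_add_cos_sq x, Real.sin_sq_add_cos_sq (m*x)]

lemma oddsum (x : ℝ) (M : ℕ) :
    ∑ j ∈ (Finset.Icc 1 M).filter (fun j => Odd j), Real.sin (j*x)
      = ∑ k ∈ Finset.range ((M+1)/2), Real.sin ((2*k+1)*x) := by
  apply Finset.sum_nbij' (fun j => j / 2) (fun k => 2*k+1)
  · intro j hj
    simp only [Finset.mem_filter, Finset.mem_Icc, Nat.odd_iff] at hj
    simp only [Finset.mem_range]
    omega
  · intro k hk
    simp only [Finset.mem_range] at hk
    simp only [Finset.mem_filter, Finset.mem_Icc, Nat.odd_iff]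
    omega
  · intro j hj
    simp only [Finset.mem_filter, Finset.mem_Icc, Nat.odd_iff] at hj
    omega
  · intro k hk
    omega
  · intro j hj
    simp only [Finset.mem_filter, Finset.mem_Icc, Nat.odd_iff] at hj
    have h2 : 2 * (j/2) + 1 = j := by omega
    have h3 : ((j:ℕ):ℝ) = 2*((j/2 : ℕ):ℝ)+1 := by exact_mod_cast h2.symm
    rw [h3]

lemma key (n : ℕ) (a x : ℝ) :
    Sstar n a x * Real.sin x =
      ∑ i ∈ Finset.range n, gbinom (a-1) i * Real.sin ((((n - i + 1)/2 : ℕ):ℝ) * x)^2 := by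
  classical
  have step1 : Sstar n a x = ∑ i ∈ Finset.range n, gbinom (a-1) i *
      (∑ j ∈ (Finset.Icc 1 (n-i)).filter (fun j => Odd j), Real.sin (j*x)) := by
    unfold Sstar
    have hc : ∀ j ∈ (Finset.Icc 1 n).filter (fun j => Odd j),
        gbinom a (n-j) * Real.sin (j*x)
          = ∑ i ∈ Finset.range (n-j+1), gbinom (a-1) i * Real.sin (j*x) := by
      intro j hj
      rw [gbinom_hockey, Finset.sum_mul]
    rw [Finset.sum_congr rfl hc]
    rw [Finset.sum_comm' (t' := Finset.range n)
      (s' := fun i => (Finset.Icc 1 (n-i)).filter (fun j => Odd j))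
      (f := fun j i => gbinom (a-1) i * Real.sin (j*x))]
    · exact Finset.sum_congr rfl fun i _ => by rw [← Finset.mul_sum]
    · intro j i
      simp only [Finset.mem_filter, Finset.mem_Icc, Finset.mem_range]
      constructor
      · rintro ⟨⟨⟨h1, h2⟩, h3⟩, h4⟩
        exact ⟨⟨⟨h1, by omega⟩, h3⟩, by omega⟩
      · rintro ⟨⟨⟨h1, h2⟩, h3⟩, h4⟩
        exact ⟨⟨⟨h1, by omega⟩, h3⟩, by omega⟩
  rw [step1, Finset.sum_mul]
  refine Finset.sum_congr rfl fun i _ => ?_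
  rw [mul_assoc, oddsum, tele]

theorem stmt_11 (n : ℕ) (hn : 2 ≤ n) (heven : Even n) (a : ℝ) (ha : 1 ≤ a)
    (x : ℝ) (hx : x ∈ Set.Ioo 0 Real.pi) :
    2 * Real.sin x ≤ Sstar n a x ∧
    (Sstar n a x = 2 * Real.sin x ↔
      (n = 2 ∧ a = 1) ∨ (n = 4 ∧ a = 1 ∧ x = Real.pi / 2)) := by
  obtain ⟨hx0, hxpi⟩ := hx
  have hs : 0 < Real.sin x := Real.sin_pos_of_pos_of_lt_pi hx0 hxpi
  have hs2 : 0 < Real.sin x ^ 2 := by positivity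
  obtain ⟨m, rfl⟩ : ∃ m, n = m + 2 := ⟨n - 2, by omega⟩
  have hb : (0:ℝ) ≤ a - 1 := by linarith
  have hkey := key (m+2) a x
  rw [Finset.sum_range_succ, Finset.sum_range_succ] at hkey
  have e1 : (m + 2 - m + 1)/2 = 1 := by omega
  have e2 : (m + 2 - (m+1) + 1)/2 = 1 := by omega
  rw [e1, e2, Nat.cast_one, one_mul] at hkey
  -- hkey : Sstar (m+2) a x * sin x
  --   = (∑ i in range m, gbinom (a-1) i * sin (((m+2-i+1)/2 : ℕ) * x)^2)
  --     + gbinom (a-1) m * sin x ^ 2 + gbinom (a-1) (m+1) * sin x ^ 2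
  have hsum0 : 0 ≤ ∑ i ∈ Finset.range m,
      gbinom (a-1) i * Real.sin ((((m + 2 - i + 1)/2 : ℕ):ℝ) * x)^2 := by
    apply Finset.sum_nonneg
    intro i _
    have := one_le_gbinom hb i
    nlinarith [sq_nonneg (Real.sin ((((m + 2 - i + 1)/2 : ℕ):ℝ) * x))]
  have hgm : 1 ≤ gbinom (a-1) m := one_le_gbinom hb m
  have hgm1 : a ≤ gbinom (a-1) (m+1) := by
    have := le_gbinom_of_one_le hb (k := m+1) (by omega)
    linarith
  have hineq : 2 * Real.sin x ≤ Sstar (m+2) a x := by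
    have h2 : (2 * Real.sin x) * Real.sin x ≤ Sstar (m+2) a x * Real.sin x := by
      rw [hkey]
      nlinarith
    exact le_of_mul_le_mul_right h2 hs
  refine ⟨hineq, ?_, ?_⟩
  · -- forward: equality implies the special cases
    intro heq
    rw [heq] at hkey
    -- derive a = 1
    have ha1 : a = 1 := by nlinarith
    subst ha1
    norm_num at hkey hsum0 hgm hgm1
    rw [gbinom_zero_left, gbinom_zero_left] at hkey
    have hzero : ∑ i ∈ Finset.range m,
        gbinom (0:ℝ) i * Real.sin ((((m + 2 - i + 1)/2 : ℕ):ℝ) * x)^2 = 0 := by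
      nlinarith
    have hterm : ∀ i ∈ Finset.range m,
        Real.sin ((((m + 2 - i + 1)/2 : ℕ):ℝ) * x) = 0 := by
      intro i hi
      have := (Finset.sum_eq_zero_iff_of_nonneg (fun i _ => by
        have := one_le_gbinom (le_refl (0:ℝ)) i
        nlinarith [sq_nonneg (Real.sin ((((m + 2 - i + 1)/2 : ℕ):ℝ) * x))])).mp hzero i hi
      have hg := gbinom_zero_left i
      rw [hg, one_mul] at this
      exact pow_eq_zero_iff (by norm_num) |>.mp this
    rcases Nat.eq_zero_or_pos m with hm0 | hmpos
    · exact Or.inl ⟨by omega, rfl⟩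
    · -- m ≥ 1; m even so m ≥ 2
      have hme : Even m := by
        rcases heven with ⟨k, hk⟩
        exact ⟨k - 1, by omega⟩
      have hm2 : 2 ≤ m := by
        rcases hme with ⟨k, hk⟩; omega
      -- term i = m-1 gives sin (2x) = 0
      have h2x : Real.sin (2 * x) = 0 := by
        have := hterm (m-1) (Finset.mem_range.mpr (by omega))
        have harg : (m + 2 - (m-1) + 1)/2 = 2 := by omega
        rw [harg] at this
        exact_mod_cast this
      have hxhalf : x = Real.pi / 2 := by
        rw [Real.sin_eq_zero_iff] at h2x
        obtain ⟨k, hk⟩ := h2x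
        have hpi := Real.pi_pos
        have hk1 : k = 1 := by
          by_contra hne
          rcases lt_or_gt_of_ne hne with h | h
          · have : (k:ℝ) ≤ 0 := by exact_mod_cast Int.lt_add_one_iff.mp h
            nlinarith
          · have : (2:ℝ) ≤ (k:ℝ) := by exact_mod_cast h
            nlinarith
        rw [hk1] at hk
        push_cast at hk
        linarith
      -- rule out m ≥ 3
      have hm4 : m = 2 := by
        by_contra hne
        have hm4' : 4 ≤ m := by
          rcases hme with ⟨k, hk⟩; omega
        have h3x : Real.sin (3 * x) = 0 := by
          have := hterm (m-3) (Finset.mem_range.mpr (by omega))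
          have harg : (m + 2 - (m-3) + 1)/2 = 3 := by omega
          rw [harg] at this
          exact_mod_cast this
        rw [hxhalf] at h3x
        have harg : (3:ℝ) * (Real.pi/2) = Real.pi + Real.pi/2 := by ring
        rw [harg, Real.sin_add, Real.sin_pi, Real.cos_pi, Real.sin_pi_div_two] at h3x
        norm_num at h3x
      subst hm4
      right
      exact ⟨rfl, rfl, hxhalf⟩
  · -- backward
    rintro (⟨hn2, ha1⟩ | ⟨hn4, ha1, hx2⟩)
    · have hm0 : m = 0 := by omega
      subst hm0 ha1
      norm_num at hkey
      rw [gbinom_zero_left, gbinom_zero_left] at hkey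
      have : Sstar 2 1 x * Real.sin x = (2 * Real.sin x) * Real.sin x := by
        rw [hkey]; ring
      exact mul_right_cancel₀ hs.ne' this
    · have hm2 : m = 2 := by omega
      subst hm2 ha1 hx2
      norm_num at hkey
      rw [Finset.sum_range_succ, Finset.sum_range_succ, Finset.sum_range_zero] at hkey
      norm_num at hkey
      rw [show (2:ℝ) * (Real.pi/2) = Real.pi by ring, Real.sin_pi,
        gbinom_zero_left, gbinom_zero_left] at hkey
      show Sstar 4 1 (Real.pi/2) = 2 * Real.sin (Real.pi/2)
      rw [hkey, Real.sin_pi_div_two, gbinom_zero_left, gbinom_zero_left]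
      norm_num
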